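/- Let w, z, ζ ∈ ℂ with τ(w,ζ) > τ(w,z), where τ(w,z) = √|Δ_w(z)|. Then |ζ − z| ≥ (τ(w,ζ) − τ(w,z))² / (3 τ(w,ζ) + 2 |Im w|). -/

import Mathlib

/-!
Writing `a = Re w` and `b = Im w`, one has `Δ_w(u) = (u - a)² + b²`. Hence `|u - a| ≤ τ(w,u) + |b|`, and
`Δ_w(ζ) - Δ_w(z) = (ζ - z)((ζ - a) + (z - a))` gives `τ(w,ζ)² - τ(w,z)² ≤ |ζ - z| (τ(w,ζ) + τ(w,z) + 2|b|)`.
Since `0 ≤ τ(w,z) < τ(w,ζ)`, the left side dominates `(τ(w,ζ) - τ(w,z))²` and the bracket is at most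
`3τ(w,ζ) + 2|b|`.
-/

/-- The characteristic polynomial `Δ_w(z) = (z-w)(z-conj w)`. -/
noncomputable def Delta (w z : ℂ) : ℂ := (z - w) * (z - (starRingEnd ℂ) w)

/-- The Cassini pseudo-metric `τ(w,z) = √|Δ_w(z)|`. -/
noncomputable def tau (w z : ℂ) : ℝ := Real.sqrt ‖Delta w z‖

/-- The complex spherical polynomials: `S_{w,2m}(z) = Δ_w(z)^m`,
`S_{w,2m+1}(z) = Δ_w(z)^m (z−w)`. -/
noncomputable def Sph (w : ℂ) (n : ℕ) (z : ℂ) : ℂ :=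
  Delta w z ^ (n / 2) * (if n % 2 = 1 then z - w else 1)

theorem norm_le_sqrt_norm_sq_add_sq_add_norm {𝕜 : Type*} [NormedDivisionRing 𝕜] (x y : 𝕜) :
    ‖x‖ ≤ √‖x ^ 2 + y ^ 2‖ + ‖y‖ := by
  have hsq : ‖x‖ ^ 2 ≤ ‖x ^ 2 + y ^ 2‖ + ‖y‖ ^ 2 := by
    calc ‖x‖ ^ 2 = ‖(x ^ 2 + y ^ 2) - y ^ 2‖ := by rw [add_sub_cancel_right, norm_pow]
      _ ≤ ‖x ^ 2 + y ^ 2‖ + ‖y‖ ^ 2 := by rw [← norm_pow]; exact norm_sub_le _ _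
  have hroot := Real.sq_sqrt (norm_nonneg (x ^ 2 + y ^ 2))
  refine (pow_le_pow_iff_left₀ (norm_nonneg x) (by positivity) two_ne_zero).1 ?_
  nlinarith [Real.sqrt_nonneg ‖x ^ 2 + y ^ 2‖, norm_nonneg y]

theorem tau_nonneg (w z : ℂ) : 0 ≤ tau w z := Real.sqrt_nonneg _

theorem tau_sq (w z : ℂ) : tau w z ^ 2 = ‖Delta w z‖ := Real.sq_sqrt (norm_nonneg _)

theorem Delta_eq_sq_add_sq (w z : ℂ) : Delta w z = (z - w.re) ^ 2 + (w.im : ℂ) ^ 2 := by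
  conv_lhs => rw [Delta, ← Complex.re_add_im w, map_add, map_mul, Complex.conj_I,
    Complex.conj_ofReal, Complex.conj_ofReal]
  linear_combination (-(w.im : ℂ) ^ 2) * Complex.I_sq

theorem norm_sub_re_le_tau_add (w z : ℂ) : ‖z - w.re‖ ≤ tau w z + |w.im| := by
  simpa [tau, Delta_eq_sq_add_sq] using norm_le_sqrt_norm_sq_add_sq_add_norm (z - w.re) (w.im : ℂ)

theorem Delta_sub_Delta (w z ζ : ℂ) :
    Delta w ζ - Delta w z = (ζ - z) * ((ζ - w.re) + (z - w.re)) := by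
  rw [Delta_eq_sq_add_sq, Delta_eq_sq_add_sq]; ring

theorem sq_tau_sub_sq_tau_le (w z ζ : ℂ) :
    tau w ζ ^ 2 - tau w z ^ 2 ≤ ‖ζ - z‖ * (tau w ζ + tau w z + 2 * |w.im|) := by
  rw [tau_sq, tau_sq]
  calc ‖Delta w ζ‖ - ‖Delta w z‖ ≤ ‖Delta w ζ - Delta w z‖ := norm_sub_norm_le _ _
    _ = ‖ζ - z‖ * ‖(ζ - w.re) + (z - w.re)‖ := by rw [Delta_sub_Delta, norm_mul]
    _ ≤ ‖ζ - z‖ * (tau w ζ + tau w z + 2 * |w.im|) := by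
      gcongr
      linarith [norm_add_le (ζ - w.re) (z - w.re), norm_sub_re_le_tau_add w ζ,
        norm_sub_re_le_tau_add w z]

/-- If `τ(w,ζ) > τ(w,z)` then
`|ζ − z| ≥ (τ(w,ζ) − τ(w,z))² / (3τ(w,ζ) + 2|Im w|)`. -/
theorem abs_sub_ge_of_tau_lt (w z ζ : ℂ) (h : tau w z < tau w ζ) :
    (tau w ζ - tau w z) ^ 2 / (3 * tau w ζ + 2 * |w.im|) ≤ ‖ζ - z‖ := by
  have hz := tau_nonneg w z
  have hζ : 0 < tau w ζ := hz.trans_lt h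
  have hden : 0 < 3 * tau w ζ + 2 * |w.im| := by positivity
  rw [div_le_iff₀ hden]
  calc (tau w ζ - tau w z) ^ 2 ≤ tau w ζ ^ 2 - tau w z ^ 2 := by nlinarith
    _ ≤ ‖ζ - z‖ * (tau w ζ + tau w z + 2 * |w.im|) := sq_tau_sub_sq_tau_le w z ζ
    _ ≤ ‖ζ - z‖ * (3 * tau w ζ + 2 * |w.im|) := by gcongr; linarith
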